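/- Assume W != 0, c is even, and let m be the least odd positive integer with alpha_m(W) = 1 (assumed to exist). If c < a+b, a+b is even, and c + m > a+b+1, then alpha_{a+b-c+1}(R) = 1. -/

import Mathlib

open Polynomial

/-!
Write `d = a + b`. Since `d` is even and `M` is irreducible, `b` is odd: otherwise `a` and `b`
are both even and `M` is a square in characteristic 2. The factorisation of `σ(M^(2h))` into
Mersenne primes gives `deg U = u + v = 2hd`, so `deg W = 2hd - c`, which exceeds
`deg σ(M^(2h-1)) = (2h-1)d` because `c < d`. Hence `α_{d-c+1}(R)` is the sum of `α_{d+1-c}(W)`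
and the coefficient of `x^((2h-1)d-1)` in `σ(M^(2h-1))`. The first vanishes because `d + 1 - c`
is odd and smaller than `m`; the second is the subleading coefficient of `M^(2h-1)`, namely
`(2h-1)b = 1`.
-/

/-- `alpha l S` is the coefficient of `x^(deg S - l)` in `S`. -/
noncomputable def alpha (l : ℕ) (S : Polynomial (ZMod 2)) : ZMod 2 :=
  S.coeff (S.natDegree - l)

/-- `sigmaPow P n = 1 + P + ⋯ + P^n`, the sum of divisors of `P^n` for `P` irreducible. -/
noncomputable def sigmaPow (P : Polynomial (ZMod 2)) (n : ℕ) : Polynomial (ZMod 2) :=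
  ∑ i ∈ Finset.range (n + 1), P ^ i

lemma ZMod.eq_zero_of_ne_one {x : ZMod 2} (hx : x ≠ 1) : x = 0 := by
  revert x; decide

section Mersenne

variable {R : Type*} [CommSemiring R]

lemma monic_X_add_one : (X + 1 : R[X]).Monic := by
  simpa using monic_X_add_C (1 : R)

lemma monic_X_pow_mul_X_add_one_pow (a b : ℕ) : (X ^ a * (X + 1) ^ b : R[X]).Monic :=
  (monic_X_pow a).mul (monic_X_add_one.pow b)

lemma coeff_one_add_X_pow_mul_X_add_one_pow {a k : ℕ} (b : ℕ) (hk : 0 < a + k) :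
    (1 + X ^ a * (X + 1) ^ b : R[X]).coeff (a + k) = b.choose k := by
  rw [coeff_add, coeff_one, if_neg hk.ne', add_comm a k, coeff_X_pow_mul, coeff_X_add_one_pow,
    zero_add]

lemma odd_of_irreducible_one_add_X_pow_mul_X_add_one_pow [CharP R 2] {a b : ℕ}
    (hirr : Irreducible (1 + X ^ a * (X + 1) ^ b : R[X])) (hab : Even (a + b)) : Odd b := by
  by_contra hb
  obtain ⟨a', rfl⟩ := (Nat.even_add.mp hab).mpr (Nat.not_odd_iff_even.mp hb)
  obtain ⟨b', rfl⟩ := Nat.not_odd_iff_even.mp hb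
  refine not_irreducible_pow (x := (1 + X ^ a' * (X + 1) ^ b' : R[X])) (by decide : 2 ≠ 1) ?_
  rwa [add_pow_char, one_pow, mul_pow, ← pow_mul, ← pow_mul, mul_two, mul_two]

variable [Nontrivial R]

lemma natDegree_X_pow_mul_X_add_one_pow (a b : ℕ) :
    (X ^ a * (X + 1) ^ b : R[X]).natDegree = a + b := by
  rw [(monic_X_pow a).natDegree_mul (monic_X_add_one.pow b), natDegree_X_pow, ← C_1,
    natDegree_pow_X_add_C]

lemma natDegree_one_lt_natDegree_X_pow_mul_X_add_one_pow {a b : ℕ} (hab : 0 < a + b) :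
    (1 : R[X]).natDegree < (X ^ a * (X + 1) ^ b : R[X]).natDegree := by
  rwa [natDegree_X_pow_mul_X_add_one_pow, natDegree_one]

lemma natDegree_one_add_X_pow_mul_X_add_one_pow {a b : ℕ} (hab : 0 < a + b) :
    (1 + X ^ a * (X + 1) ^ b : R[X]).natDegree = a + b := by
  rw [natDegree_add_eq_right_of_natDegree_lt
    (natDegree_one_lt_natDegree_X_pow_mul_X_add_one_pow hab), natDegree_X_pow_mul_X_add_one_pow]

lemma monic_one_add_X_pow_mul_X_add_one_pow {a b : ℕ} (hab : 0 < a + b) :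
    (1 + X ^ a * (X + 1) ^ b : R[X]).Monic :=
  (monic_X_pow_mul_X_add_one_pow a b).add_of_right
    (degree_lt_degree (natDegree_one_lt_natDegree_X_pow_mul_X_add_one_pow hab))

lemma nextCoeff_one_add_X_pow_mul_X_add_one_pow {a b : ℕ} (hab : 2 ≤ a + b) (hb : 0 < b) :
    (1 + X ^ a * (X + 1) ^ b : R[X]).nextCoeff = b := by
  rw [nextCoeff_of_natDegree_pos, natDegree_one_add_X_pow_mul_X_add_one_pow (by omega),
    show a + b - 1 = a + (b - 1) by omega, coeff_one_add_X_pow_mul_X_add_one_pow _ (by omega),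
    Nat.choose_symm hb, Nat.choose_one_right]
  rw [natDegree_one_add_X_pow_mul_X_add_one_pow] <;> omega

lemma natDegree_X_pow_sum_mul_X_add_one_pow_sum {ι : Type*} (s : Finset ι) (a b : ι → ℕ)
    (hab : ∀ i ∈ s, 0 < a i + b i) :
    (X ^ (∑ i ∈ s, a i) * (X + 1) ^ (∑ i ∈ s, b i) : R[X]).natDegree =
      (∏ i ∈ s, (1 + X ^ a i * (X + 1) ^ b i : R[X])).natDegree := by
  rw [natDegree_X_pow_mul_X_add_one_pow, ← Finset.sum_add_distrib,
    natDegree_prod_of_monic _ _ fun i hi => monic_one_add_X_pow_mul_X_add_one_pow (hab i hi)]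
  exact Finset.sum_congr rfl fun i hi => (natDegree_one_add_X_pow_mul_X_add_one_pow (hab i hi)).symm

end Mersenne

lemma alpha_add_of_natDegree_lt {P Q : (ZMod 2)[X]} (h : P.natDegree < Q.natDegree) (l : ℕ) :
    alpha l (P + Q) = P.coeff (Q.natDegree - l) + alpha l Q := by
  rw [alpha, alpha, natDegree_add_eq_right_of_natDegree_lt h, coeff_add]

section SigmaPow

variable {M : (ZMod 2)[X]}

lemma sigmaPow_succ (n : ℕ) :
    sigmaPow M (n + 1) = sigmaPow M n + M ^ (n + 1) :=
  Finset.sum_range_succ _ _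

lemma natDegree_sigmaPow (hM : M.Monic) (hd : 0 < M.natDegree) (n : ℕ) :
    (sigmaPow M n).natDegree = n * M.natDegree := by
  induction n with
  | zero => simp [sigmaPow]
  | succ n ih =>
    have hlt : (sigmaPow M n).natDegree < (M ^ (n + 1)).natDegree := by
      rw [ih, hM.natDegree_pow]; exact Nat.mul_lt_mul_of_pos_right (by omega) hd
    rw [sigmaPow_succ, natDegree_add_eq_right_of_natDegree_lt hlt, hM.natDegree_pow]

lemma coeff_sigmaPow_natDegree_sub_one (hM : M.Monic) (hd : 2 ≤ M.natDegree) (n : ℕ) :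
    (sigmaPow M (n + 1)).coeff ((n + 1) * M.natDegree - 1) = (n + 1) * M.nextCoeff := by
  have hdeg : (M ^ (n + 1)).natDegree = (n + 1) * M.natDegree := hM.natDegree_pow _
  rw [sigmaPow_succ, coeff_add_eq_right_of_lt, ← hdeg,
    ← nextCoeff_of_natDegree_pos (hdeg ▸ by positivity), hM.nextCoeff_pow, nsmul_eq_mul]
  · push_cast; rfl
  · rw [natDegree_sigmaPow hM (by omega), add_mul, one_mul]; omega

end SigmaPow

theorem stmt_18_general
    (h a b : ℕ) (hh : 2 ≤ h)
    (hb : 1 ≤ b) (hab5 : 5 ≤ a + b)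
    (M : Polynomial (ZMod 2)) (hM : M = 1 + X ^ a * (X + 1) ^ b)
    (hMirr : Irreducible M)
    (J : Finset ℕ) (aj bj : ℕ → ℕ)
    (haj : ∀ j ∈ J, 1 ≤ aj j)
    (hfact : sigmaPow M (2 * h) = ∏ j ∈ J, (1 + X ^ aj j * (X + 1) ^ bj j))
    (u v : ℕ) (hu : u = ∑ j ∈ J, aj j) (hv : v = ∑ j ∈ J, bj j)
    (U W R : Polynomial (ZMod 2)) (c : ℕ)
    (hU : U = X ^ u * (X + 1) ^ v)
    (hW : W = U + sigmaPow M (2 * h) + 1)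
    (hc : c = 2 * h * (a + b) - W.natDegree)
    (hR : R = sigmaPow M (2 * h - 1) + W)
    (hceven : Even c)
    (m : ℕ)
    (hmleast : ∀ k, Odd k → 0 < k → alpha k W = 1 → m ≤ k)
    (hcab : c < a + b) (habeven : Even (a + b)) (hcm : a + b + 1 < c + m) :
    alpha (a + b - c + 1) R = 1 := by
  obtain ⟨n, hn⟩ : ∃ n, 2 * h - 1 = n + 1 := ⟨2 * h - 2, by omega⟩
  set d := a + b
  have hMdeg : M.natDegree = d := hM ▸ natDegree_one_add_X_pow_mul_X_add_one_pow (by omega)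
  have hMmonic : M.Monic := hM ▸ monic_one_add_X_pow_mul_X_add_one_pow (by omega)
  have hσdeg (k : ℕ) : (sigmaPow M k).natDegree = k * d :=
    hMdeg ▸ natDegree_sigmaPow hMmonic (by omega) k
  have hWdeg : W.natDegree = 2 * h * d - c := by
    have hUdeg : U.natDegree = 2 * h * d := by
      rw [hU, hu, hv, natDegree_X_pow_sum_mul_X_add_one_pow_sum J aj bj
        fun j hj => Nat.add_pos_left (haj j hj) _, ← hfact, hσdeg]
    have : W.natDegree ≤ 2 * h * d := hW ▸ natDegree_add_le_of_degree_le
      (natDegree_add_le_of_degree_le hUdeg.le (hσdeg _).le) (by simp)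
    omega
  have hWcoeff : alpha (d + 1 - c) W = 0 := by
    have hodd : Odd (d + 1 - c) := by
      rw [Nat.odd_sub (by omega), Nat.odd_add_one, ← Nat.not_even_iff_odd]; tauto
    exact ZMod.eq_zero_of_ne_one fun h1 => absurd (hmleast _ hodd (by omega) h1) (by omega)
  have hσcoeff : (sigmaPow M (n + 1)).coeff ((n + 1) * d - 1) = 1 := by
    have hbodd := odd_of_irreducible_one_add_X_pow_mul_X_add_one_pow (hM ▸ hMirr) habeven
    rw [← hMdeg, coeff_sigmaPow_natDegree_sub_one hMmonic (by omega), hM,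
      nextCoeff_one_add_X_pow_mul_X_add_one_pow (by omega) hb, ← Nat.cast_succ, ← Nat.cast_mul]
    exact (Nat.odd_mul.mpr ⟨Nat.odd_iff.mpr (by omega), hbodd⟩).natCast_zmod_two
  have hhd : 2 * h * d = (n + 1) * d + d := by
    rw [show 2 * h = n + 1 + 1 by omega, add_one_mul]
  have hlt : (sigmaPow M (2 * h - 1)).natDegree < W.natDegree := by
    rw [hσdeg, hWdeg, hn]; omega
  rw [hR, alpha_add_of_natDegree_lt hlt, show d - c + 1 = d + 1 - c by omega, hWcoeff, hn,
    add_zero, hWdeg, show 2 * h * d - c - (d + 1 - c) = (n + 1) * d - 1 by omega, hσcoeff]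

theorem stmt_18
    (h a b : ℕ) (hh : 2 ≤ h) (hp : Nat.Prime (2 * h + 1))
    (ha : 1 ≤ a) (hb : 1 ≤ b) (hab5 : 5 ≤ a + b)
    (M : Polynomial (ZMod 2)) (hM : M = 1 + X ^ a * (X + 1) ^ b)
    (hMirr : Irreducible M)
    (J : Finset ℕ) (aj bj : ℕ → ℕ)
    (haj : ∀ j ∈ J, 1 ≤ aj j) (hbj : ∀ j ∈ J, 1 ≤ bj j)
    (hMjirr : ∀ j ∈ J, Irreducible (1 + X ^ aj j * (X + 1) ^ bj j : Polynomial (ZMod 2)))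
    (hdistinct : ∀ i ∈ J, ∀ j ∈ J, i ≠ j →
      (1 + X ^ aj i * (X + 1) ^ bj i : Polynomial (ZMod 2)) ≠
        1 + X ^ aj j * (X + 1) ^ bj j)
    (hfact : sigmaPow M (2 * h) = ∏ j ∈ J, (1 + X ^ aj j * (X + 1) ^ bj j))
    (u v : ℕ) (hu : u = ∑ j ∈ J, aj j) (hv : v = ∑ j ∈ J, bj j)
    (U W R : Polynomial (ZMod 2)) (c : ℕ)
    (hU : U = X ^ u * (X + 1) ^ v)
    (hW : W = U + sigmaPow M (2 * h) + 1)
    (hc : c = 2 * h * (a + b) - W.natDegree)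
    (hR : R = sigmaPow M (2 * h - 1) + W)
    (hW0 : W ≠ 0) (hceven : Even c)
    (m : ℕ) (hmodd : Odd m) (hmpos : 0 < m) (hmW : alpha m W = 1)
    (hmleast : ∀ k, Odd k → 0 < k → alpha k W = 1 → m ≤ k)
    (hcab : c < a + b) (habeven : Even (a + b)) (hcm : a + b + 1 < c + m) :
    alpha (a + b - c + 1) R = 1 :=
  stmt_18_general h a b hh hb hab5 M hM hMirr J aj bj haj hfact u v hu hv U W R c hU hW hc hR hceven
    m hmleast hcab habeven hcm
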